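/- arXiv:2011.12604 — 6 statements merged into one kernel-verified Lean document; each statement's English description precedes it below -/
import Mathlib

section
/- Let S_1, ..., S_n be compact subsets of R^q and let x be a point in the convex hull of the Minkowski sum S_1 + ... + S_n. Then there exist points x_i in conv(S_i) for each i with x = x_1 + ... + x_n, such that x_i ∈ S_i for all but at most q indices i. -/
/-!
Lift each `S i` to `S i × {eᵢ}` in `E × (ι → 𝕜)`. A point `x` of `conv (∑ S i)` yields
`(x, 1, …, 1) / |ι|` in the convex hull of the union of the lifts, hence, by Carathéodory, a
nonnegative combination of affinely independent lifted points. These lie in the hyperplane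
`∑ⱼ vⱼ = 1`, so they are linearly independent and there are at most `dim E + |ι|` of them. Each
index `i` carries at least one of them, so at most `dim E` indices carry two or more. Grouping
the points by index writes `x = ∑ yᵢ` with `yᵢ ∈ conv (S i)`, and `yᵢ ∈ S i` whenever `i`
carries a single point (whose weight is then `1`).
-/

open scoped Pointwise

open Finset Module

theorem AffineIndependent.linearIndependent_of_forall_map_eq_one {k V ι : Type*} [Field k]
    [AddCommGroup V] [Module k V] {p : ι → V} (hp : AffineIndependent k p) (f : V →ₗ[k] k)
    (hf : ∀ i, f (p i) = 1) : LinearIndependent k p := by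
  rw [linearIndependent_iff']
  intro s c hc
  have hc_sum : ∑ i ∈ s, c i = 0 := by simpa [hf] using congr_arg f hc
  refine hp s c hc_sum ?_
  rw [s.weightedVSub_eq_weightedVSubOfPoint_of_sum_eq_zero c p hc_sum 0]
  simpa using hc

theorem Fintype.card_filter_one_lt_card_fiber_add_card_le {κ ι : Type*} [Fintype κ] [Fintype ι]
    [DecidableEq ι] {f : κ → ι} (hf : Function.Surjective f) :
    #{i | 1 < #{k | f k = i}} + Fintype.card ι ≤ Fintype.card κ := by
  have hfiber : ∀ i, (if 1 < #{k | f k = i} then 1 else 0) + 1 ≤ #{k | f k = i} := by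
    intro i
    obtain ⟨k, rfl⟩ := hf i
    have : 0 < #{k' | f k' = f k} := Finset.card_pos.2 ⟨k, by simp⟩
    split_ifs <;> omega
  calc #{i | 1 < #{k | f k = i}} + Fintype.card ι
      = ∑ i, ((if 1 < #{k | f k = i} then 1 else 0) + 1) := by
        simp [sum_add_distrib, sum_boole]
    _ ≤ ∑ i, #{k | f k = i} := sum_le_sum fun i _ => hfiber i
    _ = Fintype.card κ := (card_eq_sum_card_fiberwise fun k _ => mem_univ (f k)).symm

theorem mem_convexHull_iUnion_image_prod_single {𝕜 E ι : Type*} [Ring 𝕜] [PartialOrder 𝕜]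
    [AddCommGroup E] [Module 𝕜 E] [DecidableEq ι] {S : ι → Set E} {i : ι} {g : E}
    (hg : g ∈ convexHull 𝕜 (S i)) :
    (g, Pi.single i 1) ∈ convexHull 𝕜 (⋃ j, (fun s => (s, Pi.single j (1 : 𝕜))) '' S j) := by
  let lift : E →ᵃ[𝕜] E × (ι → 𝕜) :=
    { toFun := fun s => (s, Pi.single i 1)
      linear := LinearMap.inl 𝕜 E (ι → 𝕜)
      map_vadd' := fun p v => by simp [vadd_eq_add] }
  have : lift g ∈ lift '' convexHull 𝕜 (S i) := Set.mem_image_of_mem _ hg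
  rw [lift.image_convexHull] at this
  exact convexHull_mono (Set.subset_iUnion_of_subset i subset_rfl) this

section

variable {𝕜 E ι κ : Type*} [Field 𝕜] [LinearOrder 𝕜] [IsStrictOrderedRing 𝕜]
  [AddCommGroup E] [Module 𝕜 E]

theorem exists_sum_eq_of_fiberwise_sum_weight_eq_one [Fintype ι] [DecidableEq ι] [Fintype κ]
    (S : ι → Set E) {idx : κ → ι} {s : κ → E} (hs : ∀ k, s k ∈ S (idx k)) {W : κ → 𝕜}
    (hW : ∀ k, 0 ≤ W k) (hW_fiber : ∀ i, ∑ k with idx k = i, W k = 1) :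
    ∃ y : ι → E, (∀ i, y i ∈ convexHull 𝕜 (S i)) ∧ ∑ k, W k • s k = ∑ i, y i ∧
      ∃ I : Finset ι, #I + Fintype.card ι ≤ Fintype.card κ ∧ ∀ i ∉ I, y i ∈ S i := by
  have hsurj : Function.Surjective idx := fun i => by
    by_contra! h
    simpa [filter_false_of_mem fun k _ => h k] using hW_fiber i
  refine ⟨fun i => ∑ k with idx k = i, W k • s k, fun i => ?_, (sum_fiberwise _ _ _).symm,
    _, Fintype.card_filter_one_lt_card_fiber_add_card_le hsurj, fun i hi => ?_⟩
  · refine (convex_convexHull 𝕜 _).sum_mem (fun k _ => hW k) (hW_fiber i) fun k hk => ?_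
    exact subset_convexHull 𝕜 _ ((mem_filter.1 hk).2 ▸ hs k)
  · obtain ⟨k, rfl⟩ := hsurj i
    have hfiber : ({k' | idx k' = idx k} : Finset κ) = {k} :=
      eq_singleton_iff_unique_mem.2 ⟨by simp, fun k' hk' =>
        card_le_one.1 (by simpa using hi) k' hk' k (by simp)⟩
    have hWk : W k = 1 := by simpa [hfiber] using hW_fiber (idx k)
    simpa [hfiber, hWk] using hs k

theorem inv_card_smul_mem_convexHull_iUnion_image_prod_single [Fintype ι] [Nonempty ι]
    [DecidableEq ι] {S : ι → Set E} {x : E} (hx : x ∈ convexHull 𝕜 (∑ i, S i)) :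
    (Fintype.card ι : 𝕜)⁻¹ • (x, 1) ∈
      convexHull 𝕜 (⋃ j, (fun s => (s, Pi.single j (1 : 𝕜))) '' S j) := by
  rw [convexHull_sum, Set.mem_fintype_sum] at hx
  obtain ⟨g, hg, rfl⟩ := hx
  have hsum : ∑ i, (Fintype.card ι : 𝕜)⁻¹ • (g i, Pi.single i (1 : 𝕜)) =
      (Fintype.card ι : 𝕜)⁻¹ • (∑ i, g i, 1) := by
    rw [← smul_sum, Prod.ext_iff]
    simp [Prod.fst_sum, Prod.snd_sum, univ_sum_single, Pi.one_def]
  rw [← hsum]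
  exact (convex_convexHull 𝕜 _).sum_mem (fun _ _ => by positivity)
    (by simp [card_univ]) fun i _ => mem_convexHull_iUnion_image_prod_single (hg i)

theorem exists_eq_sum_of_mem_convexHull_sum [FiniteDimensional 𝕜 E] [Fintype ι]
    {S : ι → Set E} {x : E} (hx : x ∈ convexHull 𝕜 (∑ i, S i)) :
    ∃ y : ι → E, (∀ i, y i ∈ convexHull 𝕜 (S i)) ∧ x = ∑ i, y i ∧
      ∃ I : Finset ι, #I ≤ finrank 𝕜 E ∧ ∀ i ∉ I, y i ∈ S i := by
  classical
  cases isEmpty_or_nonempty ι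
  · refine ⟨0, isEmptyElim, by simpa using hx, ∅, by simp, isEmptyElim⟩
  have hlift := inv_card_smul_mem_convexHull_iUnion_image_prod_single (𝕜 := 𝕜) hx
  obtain ⟨κ, _, z, w, hzT, hz_ind, hw_pos, -, hzw⟩ := eq_pos_convex_span_of_mem_convexHull hlift
  choose idx s hs hzs using fun k => Set.mem_iUnion.1 (hzT ⟨k, rfl⟩)
  let total : E × (ι → 𝕜) →ₗ[𝕜] 𝕜 := (∑ j, LinearMap.proj j) ∘ₗ LinearMap.snd 𝕜 E (ι → 𝕜)
  have hcard : Fintype.card κ ≤ finrank 𝕜 E + Fintype.card ι := by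
    have := (hz_ind.linearIndependent_of_forall_map_eq_one total fun k => by
      simp [total, ← hzs]).fintype_card_le_finrank
    simpa [finrank_prod] using this
  have hn : (Fintype.card ι : 𝕜) ≠ 0 := Nat.cast_ne_zero.2 Fintype.card_ne_zero
  have hzw' :
      ∑ k, (Fintype.card ι * w k) • ((s k, Pi.single (idx k) 1) : E × (ι → 𝕜)) = (x, 1) := by
    simp_rw [hzs, mul_smul, ← smul_sum, hzw, smul_inv_smul₀ hn]
  have hx_eq : ∑ k, (Fintype.card ι * w k) • s k = x := by
    simpa [Prod.fst_sum] using congrArg Prod.fst hzw'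
  have hW_fiber : ∀ i, ∑ k with idx k = i, (Fintype.card ι * w k) = 1 := fun i => by
    simpa [Prod.snd_sum, Pi.single_apply, sum_filter, eq_comm] using
      congrFun (congrArg Prod.snd hzw') i
  obtain ⟨y, hy, hsum, I, hI, hyS⟩ := exists_sum_eq_of_fiberwise_sum_weight_eq_one S hs
    (fun k => mul_nonneg (Nat.cast_nonneg _) (hw_pos k).le) hW_fiber
  exact ⟨y, hy, hx_eq.symm.trans hsum, I, by omega, hyS⟩

end

theorem shapley_folkman_general (q n : ℕ) (S : Fin n → Set (EuclideanSpace ℝ (Fin q)))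
    (x : EuclideanSpace ℝ (Fin q))
    (hx : x ∈ convexHull ℝ (∑ i, S i)) :
    ∃ y : Fin n → EuclideanSpace ℝ (Fin q),
      (∀ i, y i ∈ convexHull ℝ (S i)) ∧ x = ∑ i, y i ∧
      ∃ I : Finset (Fin n), I.card ≤ q ∧ ∀ i ∉ I, y i ∈ S i := by
  simpa using exists_eq_sum_of_mem_convexHull_sum hx

/-- Shapley-Folkman lemma: a point in the convex hull of a Minkowski sum of `n`
compact subsets of `ℝ^q` decomposes as a sum of points of the convex hulls,
all but at most `q` of which lie in the sets themselves. -/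
theorem shapley_folkman (q n : ℕ) (S : Fin n → Set (EuclideanSpace ℝ (Fin q)))
    (hS : ∀ i, IsCompact (S i)) (x : EuclideanSpace ℝ (Fin q))
    (hx : x ∈ convexHull ℝ (∑ i, S i)) :
    ∃ y : Fin n → EuclideanSpace ℝ (Fin q),
      (∀ i, y i ∈ convexHull ℝ (S i)) ∧ x = ∑ i, y i ∧
      ∃ I : Finset (Fin n), I.card ≤ q ∧ ∀ i ∉ I, y i ∈ S i :=
  shapley_folkman_general q n S x hx
end

section
/- Let S_1, ..., S_n be compact subsets of R^q, each of diameter at most d, and let x ∈ conv(S_1 + ... + S_n). Then there exist points y_i ∈ S_i for each i such that ||x − (y_1 + ... + y_n)|| ≤ sqrt(min{q, n}) · d. -/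
/-!
Write `x = ∑ₖ Wₖ zₖ` as a convex combination with `zₖ = ∑ᵢ Pₖᵢ`, `Pₖᵢ ∈ Sᵢ`. In `ℝⁿ × ℝ^q` the
vectors `(eᵢ, Pₖᵢ)` represent `(𝟙, x)` with the nonnegative coefficients `Wₖ`; by the conic
Carathéodory theorem (a dependence among the vectors of a minimal support could be subtracted
until one more coefficient vanishes) there is such a representation `cᵢₖ` supported on at most
`n + q` vectors. Each row `cᵢ·` is a probability vector, so `Xᵢ = ∑ₖ cᵢₖ Pₖᵢ ∈ conv Sᵢ` and
`∑ Xᵢ = x`; as no row is empty, at most `q` rows have two nonzero entries, and every other `Xᵢ`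
lies in `Sᵢ` already (Shapley–Folkman).

The at most `min q n` remaining `Xᵢ` are replaced greedily: given the error `v` made so far, a
point `yᵢ ∈ Sᵢ` maximizing `⟪·, v⟫` at least as much as `Xᵢ` does satisfies `⟪Xᵢ - yᵢ, v⟫ ≤ 0`,
so the squared error grows by at most `‖Xᵢ - yᵢ‖² ≤ d²`.
-/

open scoped Pointwise
open Finset Module

section ConicCaratheodory

variable {K V : Type*} [Fintype K] [AddCommGroup V] [Module ℝ V]

lemma exists_nonneg_sub_mul_eq_zero (c f : K → ℝ) (hc : ∀ k, 0 ≤ c k) (hf : ∃ k, 0 < f k) :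
    ∃ τ : ℝ, (∀ k, 0 ≤ c k - τ * f k) ∧ ∃ k, 0 < f k ∧ c k - τ * f k = 0 := by
  classical
  obtain ⟨k₀, hk₀, hmin⟩ := exists_min_image {k | 0 < f k} (fun k => c k / f k)
    (by simpa [Finset.Nonempty] using hf)
  have hfk₀ : 0 < f k₀ := by simpa using hk₀
  refine ⟨c k₀ / f k₀, fun k => ?_, k₀, hfk₀, by field_simp; ring⟩
  rcases lt_or_ge 0 (f k) with hfk | hfk
  · have := hmin k (by simpa using hfk)
    rw [div_le_div_iff₀ hfk₀ hfk] at this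
    rw [div_mul_eq_mul_div, sub_nonneg, div_le_iff₀ hfk₀]
    linarith
  · nlinarith [div_nonneg (hc k₀) hfk₀.le, hc k]

theorem exists_nonneg_sum_smul_eq_linearIndepOn (u : K → V) (c : K → ℝ) (hc : ∀ k, 0 ≤ c k) :
    ∃ c' : K → ℝ, (∀ k, 0 ≤ c' k) ∧ ∑ k, c' k • u k = ∑ k, c k • u k ∧
      LinearIndepOn ℝ u (↑({k | c' k ≠ 0} : Finset K)) := by
  classical
  obtain ⟨c', ⟨hc'0, hc'u⟩, hmin⟩ := (measure fun c' : K → ℝ => #{k | c' k ≠ 0}).wf.has_min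
    {c' | (∀ k, 0 ≤ c' k) ∧ ∑ k, c' k • u k = ∑ k, c k • u k} ⟨c, hc, rfl⟩
  refine ⟨c', hc'0, hc'u, ?_⟩
  set s : Finset K := {k | c' k ≠ 0}
  suffices key : ∀ f : K → ℝ, ∑ k ∈ s, f k • u k = 0 → ∀ k ∈ s, ¬ 0 < f k by
    refine not_not.mp fun hdep => ?_
    obtain ⟨f, hfu, k₀, hk₀, hfk₀⟩ := not_linearIndepOn_finset_iff.mp hdep
    rcases hfk₀.lt_or_gt with hneg | hpos
    · exact key (-f) (by simp [neg_smul, hfu]) k₀ hk₀ (by simpa using hneg)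
    · exact key f hfu k₀ hk₀ hpos
  intro f hfu k₁ hk₁ hfk₁
  set g : K → ℝ := fun k => if k ∈ s then f k else 0
  obtain ⟨τ, hnonneg, k₂, hgk₂, hk₂⟩ := exists_nonneg_sub_mul_eq_zero c' g hc'0 ⟨k₁, by simpa [g, hk₁]⟩
  have hg : ∑ k, g k • u k = 0 := by simpa [g, ite_smul, Finset.sum_ite_mem] using hfu
  have hgs : ∀ k, c' k = 0 → g k = 0 := fun k hk => if_neg (by simp [s, hk])
  refine hmin (fun k => c' k - τ * g k) ⟨hnonneg, ?_⟩ (card_lt_card ⟨fun k hk => ?_, fun hsub => ?_⟩)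
  · simp [sub_smul, mul_smul, sum_sub_distrib, ← smul_sum, hg, hc'u]
  · simp only [mem_filter, mem_univ, true_and] at hk ⊢
    exact fun hc'k => hk (by rw [hc'k, hgs k hc'k, mul_zero, sub_zero])
  · have hk₂s : k₂ ∈ s := by simpa [s] using fun h => hgk₂.ne' (hgs k₂ h)
    simpa [hk₂] using hsub hk₂s

end ConicCaratheodory

lemma card_filter_two_le_add_card_le_sum {ι : Type*} (s : Finset ι) (a : ι → ℕ)
    (ha : ∀ i ∈ s, 1 ≤ a i) : #{i ∈ s | 2 ≤ a i} + #s ≤ ∑ i ∈ s, a i := by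
  rw [card_filter, card_eq_sum_ones, ← sum_add_distrib]
  exact sum_le_sum fun i hi => by have := ha i hi; split_ifs <;> omega

lemma sum_smul_mem_of_card_support_le_one {K E : Type*} [Fintype K] [AddCommGroup E]
    [Module ℝ E] {w : K → ℝ} {p : K → E} {s : Set E} (hw : ∑ k, w k = 1) (hp : ∀ k, p k ∈ s)
    (hsupp : #{k | w k ≠ 0} ≤ 1) : ∑ k, w k • p k ∈ s := by
  classical
  obtain ⟨k₀, -, hk₀⟩ := exists_ne_zero_of_sum_ne_zero (hw ▸ one_ne_zero)
  have hzero : ∀ k, k ≠ k₀ → w k = 0 := fun k hk => by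
    by_contra hwk
    exact hk (card_le_one.mp hsupp k (by simpa using hwk) k₀ (by simpa using hk₀))
  rw [Fintype.sum_eq_single k₀ hzero] at hw
  rw [Fintype.sum_eq_single k₀ fun k hk => by rw [hzero k hk, zero_smul], hw, one_smul]
  exact hp k₀

lemma sum_smul_single_prod {ι K E : Type*} [Fintype ι] [Fintype K] [DecidableEq ι]
    [AddCommGroup E] [Module ℝ E] (c : ι × K → ℝ) (P : ι → K → E) :
    ∑ p, c p • ((Pi.single p.1 1 : ι → ℝ), P p.1 p.2) =
      (fun i => ∑ k, c (i, k), ∑ i, ∑ k, c (i, k) • P i k) := by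
  ext i
  · simp [Prod.fst_sum, Finset.sum_apply, Fintype.sum_prod_type, Pi.single_apply]
  · simp [Prod.snd_sum, Fintype.sum_prod_type]

theorem exists_sum_eq_of_mem_convexHull_sum {ι E : Type*} [Fintype ι] [AddCommGroup E]
    [Module ℝ E] [FiniteDimensional ℝ E] {S : ι → Set E} {x : E}
    (hx : x ∈ convexHull ℝ (∑ i, S i)) :
    ∃ X : ι → E, (∀ i, X i ∈ convexHull ℝ (S i)) ∧ ∑ i, X i = x ∧
      ∃ B : Finset ι, #B ≤ finrank ℝ E ∧ ∀ i ∉ B, X i ∈ S i := by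
  classical
  obtain ⟨K, _, W, z, hW0, hW1, hz, rfl⟩ := mem_convexHull_iff_exists_fintype.mp hx
  choose P hP hPz using fun k => (Set.mem_fintype_sum S (z k)).mp (hz k)
  obtain ⟨c, hc0, hcu, hli⟩ := exists_nonneg_sum_smul_eq_linearIndepOn
    (fun p : ι × K => ((Pi.single p.1 1 : ι → ℝ), P p.2 p.1)) (fun p => W p.2) (fun p => hW0 p.2)
  simp only [sum_smul_single_prod (P := fun i k => P k i), Prod.ext_iff, funext_iff, hW1] at hcu
  obtain ⟨hrow, hsum⟩ := hcu
  have hsupp : ∑ i, #{k | c (i, k) ≠ 0} ≤ Fintype.card ι + finrank ℝ E := by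
    have := hli.fintype_card_le_finrank
    simpa [card_filter, Fintype.sum_prod_type, Module.finrank_prod] using this
  have hpos : ∀ i ∈ univ, 1 ≤ #{k | c (i, k) ≠ 0} := fun i _ => by
    obtain ⟨k, -, hk⟩ := exists_ne_zero_of_sum_ne_zero ((hrow i).symm ▸ one_ne_zero)
    exact card_pos.mpr ⟨k, by simpa using hk⟩
  refine ⟨fun i => ∑ k, c (i, k) • P k i, fun i => ?_, ?_,
    ({i | 2 ≤ #{k | c (i, k) ≠ 0}} : Finset ι), ?_,
    fun i hi => sum_smul_mem_of_card_support_le_one (hrow i) (hP · i) ?_⟩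
  · exact (convex_convexHull ℝ _).sum_mem (fun k _ => hc0 _) (hrow i)
      fun k _ => subset_convexHull ℝ _ (hP k i)
  · rw [hsum, sum_comm]
    simp [← smul_sum, hPz]
  · have := card_filter_two_le_add_card_le_sum univ _ hpos
    simp only [card_univ] at this
    omega
  · simpa using hi

theorem exists_mem_norm_sum_sub_sq_le {ι E : Type*} [NormedAddCommGroup E]
    [InnerProductSpace ℝ E] (s : Finset ι) {S : ι → Set E} {X : ι → E} {d : ℝ}
    (hX : ∀ i ∈ s, X i ∈ convexHull ℝ (S i)) (hd : ∀ i ∈ s, ∀ y ∈ S i, ‖X i - y‖ ≤ d) :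
    ∃ y : ι → E, (∀ i ∈ s, y i ∈ S i) ∧ ‖∑ i ∈ s, (X i - y i)‖ ^ 2 ≤ #s * d ^ 2 := by
  classical
  induction s using Finset.cons_induction with
  | empty => exact ⟨0, by simp, by simp⟩
  | cons a s ha ih =>
    obtain ⟨y, hyS, hy⟩ := ih (fun i hi => hX i (mem_cons_of_mem hi))
      (fun i hi => hd i (mem_cons_of_mem hi))
    set v := ∑ i ∈ s, (X i - y i)
    obtain ⟨ya, hya, hinner⟩ := ((innerₛₗ ℝ v).convexOn convex_univ).exists_ge_of_mem_convexHull
      (Set.subset_univ _) (hX a (mem_cons_self a s))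
    have hnorm : ‖X a - ya‖ ^ 2 ≤ d ^ 2 :=
      pow_le_pow_left₀ (norm_nonneg _) (hd a (mem_cons_self a s) ya hya) 2
    have hsum : ∑ i ∈ s, (X i - Function.update y a ya i) = v :=
      sum_congr rfl fun i hi => by rw [Function.update_of_ne (ne_of_mem_of_not_mem hi ha)]
    refine ⟨Function.update y a ya, ?_, ?_⟩
    · simp only [forall_mem_cons, Function.update_self, hya, true_and]
      exact fun i hi => by rw [Function.update_of_ne (ne_of_mem_of_not_mem hi ha)]; exact hyS i hi
    · rw [sum_cons, Function.update_self, hsum, norm_add_sq_real, card_cons]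
      have : inner ℝ (X a - ya) v ≤ 0 := by
        rw [innerₛₗ_apply_apply, innerₛₗ_apply_apply] at hinner
        rw [inner_sub_left, real_inner_comm v, real_inner_comm v ya]
        linarith
      push_cast
      linarith

lemma dist_le_diam_of_mem_convexHull {E : Type*} [SeminormedAddCommGroup E] [NormedSpace ℝ E]
    {s : Set E} (hs : Bornology.IsBounded s) {x y : E} (hx : x ∈ convexHull ℝ s) (hy : y ∈ s) :
    dist x y ≤ Metric.diam s :=
  convexHull_diam s ▸ Metric.dist_le_diam_of_mem (isBounded_convexHull.2 hs) hx
    (subset_convexHull ℝ s hy)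

/-- Quantitative Shapley-Folkman lemma. -/
theorem shapley_folkman_quantitative (q n : ℕ) (d : ℝ)
    (S : Fin n → Set (EuclideanSpace ℝ (Fin q)))
    (hS : ∀ i, IsCompact (S i)) (hd : ∀ i, Metric.diam (S i) ≤ d)
    (x : EuclideanSpace ℝ (Fin q)) (hx : x ∈ convexHull ℝ (∑ i, S i)) :
    ∃ y : Fin n → EuclideanSpace ℝ (Fin q), (∀ i, y i ∈ S i) ∧
      ‖x - ∑ i, y i‖ ≤ Real.sqrt (min (q : ℝ) (n : ℝ)) * d := by
  obtain ⟨X, hXS, rfl, B, hBq, hXB⟩ := exists_sum_eq_of_mem_convexHull_sum hx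
  have hdist : ∀ i ∈ B, ∀ y ∈ S i, ‖X i - y‖ ≤ d := fun i _ y hy => by
    rw [← dist_eq_norm]
    exact (dist_le_diam_of_mem_convexHull (hS i).isBounded (hXS i) hy).trans (hd i)
  obtain ⟨y, hyS, hy⟩ := exists_mem_norm_sum_sub_sq_le B (fun i _ => hXS i) hdist
  refine ⟨fun i => if i ∈ B then y i else X i, fun i => ?_, ?_⟩
  · dsimp only
    split_ifs with hi
    exacts [hyS i hi, hXB i hi]
  have hsplit : ∑ i, X i - ∑ i, (if i ∈ B then y i else X i) = ∑ i ∈ B, (X i - y i) := by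
    simp [← sum_sub_distrib, apply_ite, sum_ite_mem]
  have hB : (#B : ℝ) ≤ min (q : ℝ) n := by
    refine le_min ?_ ?_ <;> norm_cast
    · simpa using hBq
    · simpa using card_le_univ B
  rcases Nat.eq_zero_or_pos n with rfl | hn
  · simp
  have hd0 : 0 ≤ d := Metric.diam_nonneg.trans (hd ⟨0, hn⟩)
  rw [hsplit]
  calc ‖∑ i ∈ B, (X i - y i)‖ = √(‖∑ i ∈ B, (X i - y i)‖ ^ 2) :=
        (Real.sqrt_sq (norm_nonneg _)).symm
    _ ≤ √(min (q : ℝ) n * d ^ 2) := Real.sqrt_le_sqrt (hy.trans (by gcongr))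
    _ = √(min (q : ℝ) n) * d := by rw [Real.sqrt_mul (by positivity), Real.sqrt_sq hd0]
end

section
/- Let X ⊆ R^d be compact and f : X → R lower semicontinuous and bounded below. Define f̃ on conv(X) by f̃(x) = inf { Σ_{k=1}^{d+1} α^k f(z^k) : α ∈ S_d, z^k ∈ X, Σ α^k z^k = x }, where S_d is the probability simplex of dimension d. Then for every x ∈ conv(X) the infimum is attained. -/
/-- The set of values `Σ α^k f(z^k)` over representations `x = Σ α^k z^k` with
`α` in the `d`-dimensional probability simplex and `z^k ∈ X`. -/
def convexifySet (d : ℕ) (X : Set (EuclideanSpace ℝ (Fin d)))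
    (f : EuclideanSpace ℝ (Fin d) → ℝ) (x : EuclideanSpace ℝ (Fin d)) : Set ℝ :=
  {r | ∃ (α : Fin (d + 1) → ℝ) (z : Fin (d + 1) → EuclideanSpace ℝ (Fin d)),
    (∀ k, 0 ≤ α k) ∧ (∑ k, α k = 1) ∧ (∀ k, z k ∈ X) ∧
    (∑ k, α k • z k = x) ∧ r = ∑ k, α k * f (z k)}

lemma aux_dsum {M : Type*} [AddCommMonoid M] {n N : ℕ} (hn : n ≤ N) (φ : Fin n → M) :
    (∑ k : Fin N, if h : (k : ℕ) < n then φ ⟨k, h⟩ else 0) = ∑ j : Fin n, φ j := by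
  classical
  have h1 : ∑ k ∈ Finset.univ.map (Fin.castLEEmb hn),
      (if h : (k : ℕ) < n then φ ⟨k, h⟩ else 0) = ∑ j : Fin n, φ j := by
    rw [Finset.sum_map]
    refine Finset.sum_congr rfl fun j _ => ?_
    have hj : ((Fin.castLEEmb hn j : Fin N) : ℕ) < n := j.isLt
    rw [dif_pos hj]
    exact congrArg φ (Fin.ext rfl)
  rw [← h1]
  refine (Finset.sum_subset (Finset.subset_univ _) ?_).symm
  intro k _ hk
  rw [dif_neg]
  intro hlt
  exact hk (Finset.mem_map.2 ⟨⟨(k : ℕ), hlt⟩, Finset.mem_univ _, Fin.ext rfl⟩)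

/-- For `X` compact and `f` l.s.c. bounded below on `X`, the infimum defining the
convexification `f̃(x)` is attained for every `x ∈ conv(X)`. -/
theorem convexification_inf_attained (d : ℕ) (X : Set (EuclideanSpace ℝ (Fin d)))
    (hX : IsCompact X) (f : EuclideanSpace ℝ (Fin d) → ℝ)
    (hf : LowerSemicontinuousOn f X) (hbdd : BddBelow (f '' X)) :
    ∀ x ∈ convexHull ℝ X, ∃ r, IsLeast (convexifySet d X f x) r := by
  classical
  obtain ⟨m, hm⟩ := hbdd
  have hmf : ∀ z ∈ X, m ≤ f z := fun z hz => hm ⟨z, hz, rfl⟩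
  intro x hx
  -- The compact set of representations
  set K : Set ((Fin (d + 1) → ℝ) × (Fin (d + 1) → EuclideanSpace ℝ (Fin d))) :=
    {p | (∀ k, 0 ≤ p.1 k) ∧ (∑ k, p.1 k = 1) ∧ (∀ k, p.2 k ∈ X) ∧
      (∑ k, p.1 k • p.2 k = x)} with hKdef
  set G : ((Fin (d + 1) → ℝ) × (Fin (d + 1) → EuclideanSpace ℝ (Fin d))) → ℝ :=
    fun p => ∑ k, p.1 k * f (p.2 k) with hGdef
  have hset : convexifySet d X f x = G '' K := by
    ext r
    constructor
    · rintro ⟨α, z, h0, h1, h2, h3, h4⟩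
      exact ⟨(α, z), ⟨h0, h1, h2, h3⟩, h4.symm⟩
    · rintro ⟨⟨α, z⟩, ⟨h0, h1, h2, h3⟩, h4⟩
      exact ⟨α, z, h0, h1, h2, h3, h4.symm⟩
  -- K is nonempty (Carathéodory)
  have hKne : K.Nonempty := by
    obtain ⟨ι, hι, z, w, hzX, hAI, hw0, hw1, hwz⟩ :=
      eq_pos_convex_span_of_mem_convexHull hx
    letI := hι
    haveI : Nonempty ι := by
      by_contra h
      rw [not_nonempty_iff] at h
      simp [Finset.univ_eq_empty] at hw1
    have hnd : Fintype.card ι ≤ d + 1 := by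
      have h1 := hAI.card_le_finrank_succ
      have h2 : Module.finrank ℝ (vectorSpan ℝ (Set.range z)) ≤
          Module.finrank ℝ (EuclideanSpace ℝ (Fin d)) := Submodule.finrank_le _
      rw [finrank_euclideanSpace_fin] at h2
      omega
    set e := Fintype.equivFin ι with he
    set α : Fin (d + 1) → ℝ :=
      fun k => if h : (k : ℕ) < Fintype.card ι then w (e.symm ⟨k, h⟩) else 0 with hα
    set z' : Fin (d + 1) → EuclideanSpace ℝ (Fin d) :=
      fun k => if h : (k : ℕ) < Fintype.card ι then z (e.symm ⟨k, h⟩)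
        else z (Classical.arbitrary ι) with hz'
    refine ⟨(α, z'), fun k => ?_, ?_, fun k => ?_, ?_⟩
    · simp only [hα]
      split
      · exact (hw0 _).le
      · rfl
    · have := aux_dsum hnd (fun j => w (e.symm j))
      simp only [hα]
      rw [this, Equiv.sum_comp e.symm w, hw1]
    · simp only [hz']
      split
      · exact hzX ⟨_, rfl⟩
      · exact hzX ⟨_, rfl⟩
    · have hpt : ∀ k : Fin (d + 1), α k • z' k =
          if h : (k : ℕ) < Fintype.card ι then w (e.symm ⟨k, h⟩) • z (e.symm ⟨k, h⟩)
          else 0 := by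
        intro k
        simp only [hα, hz']
        split
        · rfl
        · rw [zero_smul]
      rw [Finset.sum_congr rfl fun k _ => hpt k,
        aux_dsum hnd (fun j => w (e.symm j) • z (e.symm j)),
        Equiv.sum_comp e.symm (fun i => w i • z i), hwz]
  -- K is compact
  have hKclosed : IsClosed K := by
    have h1 : IsClosed {p : (Fin (d + 1) → ℝ) × (Fin (d + 1) → EuclideanSpace ℝ (Fin d)) | ∀ k, 0 ≤ p.1 k} := by
      rw [Set.setOf_forall]
      exact isClosed_iInter fun k =>
        isClosed_le continuous_const ((continuous_apply k).comp continuous_fst)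
    have h2 : IsClosed {p : (Fin (d + 1) → ℝ) × (Fin (d + 1) → EuclideanSpace ℝ (Fin d)) | ∑ k, p.1 k = 1} :=
      isClosed_eq (continuous_finset_sum _ fun k _ =>
        (continuous_apply k).comp continuous_fst) continuous_const
    have h3 : IsClosed {p : (Fin (d + 1) → ℝ) × (Fin (d + 1) → EuclideanSpace ℝ (Fin d)) | ∀ k, p.2 k ∈ X} := by
      rw [Set.setOf_forall]
      exact isClosed_iInter fun k =>
        hX.isClosed.preimage ((continuous_apply k).comp continuous_snd)
    have h4 : IsClosed {p : (Fin (d + 1) → ℝ) × (Fin (d + 1) → EuclideanSpace ℝ (Fin d)) |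
        ∑ k, p.1 k • p.2 k = x} :=
      isClosed_eq (continuous_finset_sum _ fun k _ =>
        (((continuous_apply k).comp continuous_fst)).smul
          ((continuous_apply k).comp continuous_snd)) continuous_const
    have : K = _ ∩ (_ ∩ (_ ∩ _)) := rfl
    exact (h1.inter (h2.inter (h3.inter h4)))
  have hKc : IsCompact K := by
    refine IsCompact.of_isClosed_subset
      ((isCompact_univ_pi fun _ => isCompact_Icc (a := (0:ℝ)) (b := 1)).prod
        (isCompact_univ_pi fun _ => hX)) hKclosed ?_
    rintro ⟨β, y⟩ ⟨h0, h1, h2, _⟩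
    constructor
    · intro k _
      refine ⟨h0 k, ?_⟩
      rw [← h1]
      exact Finset.single_le_sum (fun i _ => h0 i) (Finset.mem_univ k)
    · intro k _
      exact h2 k
  -- G is lower semicontinuous on K
  have hGlsc : LowerSemicontinuousOn G K := by
    show LowerSemicontinuousOn
      (fun p : (Fin (d + 1) → ℝ) × (Fin (d + 1) → EuclideanSpace ℝ (Fin d)) =>
        ∑ k : Fin (d + 1), p.1 k * f (p.2 k)) K
    apply lowerSemicontinuousOn_sum
      (f := fun (k : Fin (d + 1)) (p : (Fin (d + 1) → ℝ) × (Fin (d + 1) → EuclideanSpace ℝ (Fin d))) =>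
        p.1 k * f (p.2 k))
    intro k _ p hp
    intro y hy
    change y < p.1 k * f (p.2 k) at hy
    set a := p.1 k with ha'
    have ha : 0 ≤ a := hp.1 k
    obtain ⟨c, hcF, hyc⟩ : ∃ c, c < f (p.2 k) ∧ y < a * c := by
      rcases eq_or_lt_of_le ha with h | h
      · have hy0 : y < 0 := by rw [← h, zero_mul] at hy; exact hy
        exact ⟨f (p.2 k) - 1, by linarith, by rw [← h, zero_mul]; exact hy0⟩
      · have hdiv : y / a < f (p.2 k) := by
          rw [div_lt_iff₀ h]
          nlinarith [hy]
        obtain ⟨c, hc1, hc2⟩ := exists_between hdiv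
        exact ⟨c, hc2, by have := (div_lt_iff₀ h).1 hc1; linarith [mul_comm c a]⟩
    have hT : Filter.Tendsto (fun q : (Fin (d + 1) → ℝ) × (Fin (d + 1) → EuclideanSpace ℝ (Fin d)) => q.2 k)
        (nhdsWithin p K) (nhdsWithin (p.2 k) X) :=
      (((continuous_apply k).comp continuous_snd).continuousWithinAt).tendsto_nhdsWithin
        (fun q hq => hq.2.2.1 k)
    have e1 : ∀ᶠ q in nhdsWithin p K, c < f (q.2 k) :=
      hT.eventually (hf (p.2 k) (hp.2.2.1 k) c hcF)
    have e2 : ∀ᶠ q in nhdsWithin p K, y < q.1 k * c := by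
      have hcont : Filter.Tendsto (fun q : (Fin (d + 1) → ℝ) × (Fin (d + 1) → EuclideanSpace ℝ (Fin d)) => q.1 k * c)
          (nhdsWithin p K) (nhds (a * c)) :=
        ((((continuous_apply k).comp continuous_fst).mul continuous_const).continuousAt).mono_left
          nhdsWithin_le_nhds
      exact hcont.eventually (eventually_gt_nhds hyc)
    have e3 : ∀ᶠ q in nhdsWithin p K, q ∈ K := self_mem_nhdsWithin
    filter_upwards [e1, e2, e3] with q h1 h2 h3
    calc y < q.1 k * c := h2
      _ ≤ q.1 k * f (q.2 k) := mul_le_mul_of_nonneg_left h1.le (h3.1 k)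
  -- G is bounded below on K by m
  have hGbd : ∀ p ∈ K, m ≤ G p := by
    rintro ⟨β, y⟩ ⟨h0, h1, h2, _⟩
    have : ∀ k : Fin (d + 1), β k * m ≤ β k * f (y k) :=
      fun k => mul_le_mul_of_nonneg_left (hmf _ (h2 k)) (h0 k)
    calc m = ∑ k, β k * m := by rw [← Finset.sum_mul, h1, one_mul]
      _ ≤ ∑ k, β k * f (y k) := Finset.sum_le_sum fun k _ => this k
  -- minimization
  set M := sInf (G '' K) with hM
  have hbdd' : BddBelow (G '' K) := ⟨m, by rintro r ⟨p, hp, rfl⟩; exact hGbd p hp⟩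
  have hne : (G '' K).Nonempty := hKne.image G
  have hseq : ∀ n : ℕ, ∃ p ∈ K, G p < M + 1 / (n + 1) := by
    intro n
    have : M < M + 1 / (n + 1) := by
      have : (0:ℝ) < 1 / (n + 1) := by positivity
      linarith
    obtain ⟨r, ⟨p, hp, rfl⟩, hr⟩ := exists_lt_of_csInf_lt hne this
    exact ⟨p, hp, hr⟩
  choose q hqK hqlt using hseq
  obtain ⟨p, hpK, φ, hφ, hconv⟩ := hKc.isSeqCompact hqK
  have hGpM : G p ≤ M := by
    by_contra h
    push_neg at h
    obtain ⟨y, hy1, hy2⟩ := exists_between h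
    have htend : Filter.Tendsto (fun n => q (φ n)) Filter.atTop (nhdsWithin p K) :=
      tendsto_nhdsWithin_of_tendsto_nhds_of_eventually_within _ hconv
        (Filter.Eventually.of_forall fun n => hqK (φ n))
    have he : ∀ᶠ n in Filter.atTop, y < G (q (φ n)) :=
      htend.eventually (hGlsc p hpK y hy2)
    obtain ⟨n₀, hn₀⟩ := exists_nat_one_div_lt (show (0:ℝ) < y - M by linarith)
    obtain ⟨n, hn, hyn⟩ := (he.and (Filter.eventually_ge_atTop n₀)).exists
    have hφn : (n₀ : ℝ) + 1 ≤ (φ n : ℝ) + 1 := by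
      have : n₀ ≤ φ n := le_trans hyn (hφ.le_apply)
      exact_mod_cast Nat.succ_le_succ this
    have : G (q (φ n)) < M + 1 / (n₀ + 1) := by
      calc G (q (φ n)) < M + 1 / (φ n + 1) := hqlt (φ n)
        _ ≤ M + 1 / (n₀ + 1) := by gcongr
    linarith
  refine ⟨G p, ?_, ?_⟩
  · rw [hset]; exact ⟨p, hpK, rfl⟩
  · intro r hr
    rw [hset] at hr
    obtain ⟨p', hp', rfl⟩ := hr
    exact le_trans hGpM (csInf_le hbdd' ⟨p', hp', rfl⟩)
end

section
/- Let X ⊆ R^d be compact and f : X → R lower semicontinuous. Let f̃ be its convexification defined by f̃(x) = min { Σ_{k=1}^{d+1} α^k f(z^k) : α ∈ S_d, z^k ∈ X, Σ α^k z^k = x }. Then f̃ is convex and lower semicontinuous on conv(X), and epi(f̃) = closure(conv(epi(f))). -/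
noncomputable def convexify (d : ℕ) (X : Set (EuclideanSpace ℝ (Fin d)))
    (f : EuclideanSpace ℝ (Fin d) → ℝ) (x : EuclideanSpace ℝ (Fin d)) : ℝ :=
  sInf (convexifySet d X f x)

open Finset Filter Topology Module

section Semicontinuity

variable {α : Type*} [TopologicalSpace α] {s : Set α}

theorem LowerSemicontinuousOn.mul_of_nonneg {u v : α → ℝ} (hu : ContinuousOn u s)
    (hv : LowerSemicontinuousOn v s) (hu₀ : ∀ x ∈ s, 0 ≤ u x) (hv₀ : ∀ x ∈ s, 0 ≤ v x) :
    LowerSemicontinuousOn (fun x => u x * v x) s := by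
  intro x hx c (hc : c < u x * v x)
  rcases lt_or_ge c 0 with hc₀ | hc₀
  · filter_upwards [self_mem_nhdsWithin] with y hy
    exact hc₀.trans_le (mul_nonneg (hu₀ y hy) (hv₀ y hy))
  have hux : 0 < u x := (hu₀ x hx).lt_of_ne fun h => by
    rw [← h, zero_mul] at hc
    exact hc.not_ge hc₀
  obtain ⟨b, hcb, hbv⟩ := exists_between ((div_lt_iff₀' hux).2 hc)
  have hb : 0 < b := (div_nonneg hc₀ hux.le).trans_lt hcb
  have hcu : c / b < u x := by
    rw [div_lt_iff₀ hb]
    rwa [div_lt_iff₀' hux] at hcb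
  filter_upwards [(hu x hx).eventually (lt_mem_nhds hcu), hv x hx b hbv] with y huy hvy
  calc c = c / b * b := (div_mul_cancel₀ c hb.ne').symm
    _ < u y * v y := mul_lt_mul'' huy hvy (div_nonneg hc₀ hb.le) hb.le

theorem lowerSemicontinuousOn_of_isClosed_epigraph {f : α → ℝ}
    (h : IsClosed {p : α × ℝ | p.1 ∈ s ∧ f p.1 ≤ p.2}) : LowerSemicontinuousOn f s := by
  intro x hx y hy
  have hxy : ∀ᶠ x' in 𝓝 x, (x', y) ∈ {p : α × ℝ | p.1 ∈ s ∧ f p.1 ≤ p.2}ᶜ :=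
    ((Continuous.prodMk_left y).tendsto x).eventually
      (h.isOpen_compl.mem_nhds fun hp => hy.not_ge hp.2)
  filter_upwards [mem_nhdsWithin_of_mem_nhds hxy, self_mem_nhdsWithin] with x' hx' hx's
  exact lt_of_not_ge fun hle => hx' ⟨hx's, hle⟩

theorem IsCompact.isClosed_setOf_exists_mem {β : Type*} [TopologicalSpace β] {K : Set α}
    (hK : IsCompact K) {C : Set (α × β)} (hC : IsClosed C) :
    IsClosed {y | ∃ x ∈ K, (x, y) ∈ C} := by
  have := isCompact_iff_compactSpace.1 hK
  have hCK : IsClosed ((fun q : K × β => ((q.1 : α), q.2)) ⁻¹' C) :=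
    hC.preimage (by fun_prop)
  convert isClosedMap_snd_of_compactSpace _ hCK using 1
  ext y
  simp

end Semicontinuity

section Caratheodory

variable {𝕜 E ι : Type*} [Field 𝕜] [AddCommGroup E] [Module 𝕜 E] [FiniteDimensional 𝕜 E]

theorem exists_affine_relation_of_finrank_succ_lt_card {s : Finset ι} (z : ι → E)
    (hs : finrank 𝕜 E + 1 < #s) :
    ∃ γ : ι → 𝕜, ∑ i ∈ s, γ i = 0 ∧ ∑ i ∈ s, γ i • z i = 0 ∧ ∃ i ∈ s, γ i ≠ 0 := by
  have hdep : ¬LinearIndepOn 𝕜 (fun i => ((1 : 𝕜), z i)) (s : Set ι) := fun h => by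
    have := h.fintype_card_le_finrank
    simp only [Finset.coe_sort_coe, Fintype.card_coe, finrank_prod, finrank_self] at this
    omega
  obtain ⟨γ, hγ, i, hi, hγi⟩ := not_linearIndepOn_finset_iff.1 hdep
  exact ⟨γ, by simpa [Prod.fst_sum] using congrArg Prod.fst hγ,
    by simpa [Prod.snd_sum] using congrArg Prod.snd hγ, i, hi, hγi⟩

variable [LinearOrder 𝕜] [IsStrictOrderedRing 𝕜]

theorem exists_weights_eq_zero_of_finrank_succ_lt_card {s : Finset ι} (z : ι → E) (v w : ι → 𝕜)
    (hs : finrank 𝕜 E + 1 < #s) (hw : ∀ i ∈ s, 0 ≤ w i) :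
    ∃ i₀ ∈ s, ∃ w' : ι → 𝕜, w' i₀ = 0 ∧ (∀ i ∈ s, 0 ≤ w' i) ∧
      ∑ i ∈ s, w' i = ∑ i ∈ s, w i ∧ ∑ i ∈ s, w' i • z i = ∑ i ∈ s, w i • z i ∧
      ∑ i ∈ s, w' i * v i ≤ ∑ i ∈ s, w i * v i := by
  classical
  obtain ⟨σ, hσ, hσz, hσv, hσpos⟩ : ∃ σ : ι → 𝕜, ∑ i ∈ s, σ i = 0 ∧ ∑ i ∈ s, σ i • z i = 0 ∧
      0 ≤ ∑ i ∈ s, σ i * v i ∧ ∃ i ∈ s, 0 < σ i := by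
    obtain ⟨γ, hγ, hγz, hγne⟩ := exists_affine_relation_of_finrank_succ_lt_card z hs
    rcases le_total 0 (∑ i ∈ s, γ i * v i) with hγv | hγv
    · exact ⟨γ, hγ, hγz, hγv, exists_pos_of_sum_zero_of_exists_nonzero γ hγ hγne⟩
    · refine ⟨-γ, by simp [hγ], by simp [hγz], by simpa using hγv,
        exists_pos_of_sum_zero_of_exists_nonzero _ (by simp [hγ]) (by simpa using hγne)⟩
  -- move along `-σ` until the first weight vanishes
  obtain ⟨i₀, hi₀, hmin⟩ := (s.filter (0 < σ ·)).exists_min_image (fun i => w i / σ i)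
    (by simpa [Finset.Nonempty] using hσpos)
  rw [mem_filter] at hi₀
  set τ := w i₀ / σ i₀
  have hτ : 0 ≤ τ := div_nonneg (hw i₀ hi₀.1) hi₀.2.le
  refine ⟨i₀, hi₀.1, fun i => w i - τ * σ i, by simp [τ, div_mul_cancel₀ _ hi₀.2.ne'],
    fun i hi => ?_, ?_, ?_, ?_⟩
  · rcases lt_or_ge 0 (σ i) with hσi | hσi
    · have := hmin i (mem_filter.2 ⟨hi, hσi⟩)
      rw [le_div_iff₀ hσi] at this
      linarith
    · nlinarith [hw i hi]
  · simp [sum_sub_distrib, ← mul_sum, hσ]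
  · simp [sub_smul, sum_sub_distrib, mul_smul, ← smul_sum, hσz]
  · simp only [sub_mul, sum_sub_distrib, mul_assoc, ← mul_sum]
    nlinarith

theorem exists_subset_card_le_weights_le (s : Finset ι) (z : ι → E) (v w : ι → 𝕜)
    (hw : ∀ i ∈ s, 0 ≤ w i) :
    ∃ t ⊆ s, #t ≤ finrank 𝕜 E + 1 ∧ ∃ w' : ι → 𝕜, (∀ i ∈ t, 0 ≤ w' i) ∧
      ∑ i ∈ t, w' i = ∑ i ∈ s, w i ∧ ∑ i ∈ t, w' i • z i = ∑ i ∈ s, w i • z i ∧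
      ∑ i ∈ t, w' i * v i ≤ ∑ i ∈ s, w i * v i := by
  classical
  induction s using Finset.strongInduction generalizing w with
  | H s ih =>
    by_cases hs : #s ≤ finrank 𝕜 E + 1
    · exact ⟨s, subset_rfl, hs, w, hw, rfl, rfl, le_rfl⟩
    obtain ⟨i₀, hi₀, w₁, hw₁i₀, hw₁, hsum, hz, hv⟩ :=
      exists_weights_eq_zero_of_finrank_succ_lt_card z v w (not_le.1 hs) hw
    obtain ⟨t, hts, ht, w', hw', hsum', hz', hv'⟩ :=
      ih (s.erase i₀) (erase_ssubset hi₀) w₁ fun i hi => hw₁ i (mem_of_mem_erase hi)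
    refine ⟨t, hts.trans (erase_subset _ _), ht, w', hw', ?_, ?_, ?_⟩
    · rw [hsum', sum_erase _ hw₁i₀, hsum]
    · rw [hz', sum_erase _ (by simp [hw₁i₀]), hz]
    · rw [sum_erase _ (by simp [hw₁i₀])] at hv'
      exact hv'.trans hv

end Caratheodory

section Combinations

variable {ι E : Type*} [Fintype ι] {X : Set E} {f : E → ℝ}

def convexCombinations (ι : Type*) [Fintype ι] (X : Set E) : Set ((ι → ℝ) × (ι → E)) :=
  stdSimplex ℝ ι ×ˢ Set.univ.pi fun _ => X

def weightedValue (f : E → ℝ) (p : (ι → ℝ) × (ι → E)) : ℝ := ∑ k, p.1 k * f (p.2 k)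

section Topology

variable [TopologicalSpace E]

theorem isCompact_convexCombinations (hX : IsCompact X) :
    IsCompact (convexCombinations ι X) :=
  (isCompact_stdSimplex ℝ ι).prod (isCompact_univ_pi fun _ => hX)

theorem lowerSemicontinuousOn_weightedValue (hf : LowerSemicontinuousOn f X)
    (hfb : BddBelow (f '' X)) :
    LowerSemicontinuousOn (weightedValue f) (convexCombinations ι X) := by
  obtain ⟨m, hm⟩ := hfb
  have hsplit : weightedValue f = fun p : (ι → ℝ) × (ι → E) =>
      ∑ k, (p.1 k * (f (p.2 k) - m) + p.1 k * m) := by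
    ext p
    exact sum_congr rfl fun k _ => by ring
  rw [hsplit]
  refine lowerSemicontinuousOn_sum fun k _ => LowerSemicontinuousOn.add ?_
    (ContinuousOn.lowerSemicontinuousOn (by fun_prop))
  refine LowerSemicontinuousOn.mul_of_nonneg (by fun_prop) ?_ (fun p hp => hp.1.1 k)
    fun p hp => sub_nonneg.2 (hm (Set.mem_image_of_mem f (hp.2 k trivial)))
  exact (hf.comp (by fun_prop) fun p hp => hp.2 k trivial).add
    continuousOn_const.lowerSemicontinuousOn

end Topology

variable [AddCommGroup E] [Module ℝ E]

def weightedSum (p : (ι → ℝ) × (ι → E)) : E := ∑ k, p.1 k • p.2 k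

theorem weightedSum_mem_convexHull {p : (ι → ℝ) × (ι → E)} (hp : p ∈ convexCombinations ι X) :
    weightedSum p ∈ convexHull ℝ X :=
  mem_convexHull_of_exists_fintype p.1 p.2 hp.1.1 hp.1.2 (fun k => hp.2 k trivial) rfl

theorem setOf_weightedValue_le_subset_convexHull :
    {q : E × ℝ | ∃ p ∈ convexCombinations ι X, weightedSum p = q.1 ∧ weightedValue f p ≤ q.2} ⊆
      convexHull ℝ {q : E × ℝ | q.1 ∈ X ∧ f q.1 ≤ q.2} := by
  rintro ⟨x, t⟩ ⟨⟨α, z⟩, ⟨⟨hα₀, hα₁⟩, hz⟩, rfl, ht⟩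
  -- lift every point by the same slack `c`, so that the combination lands exactly at height `t`
  set c := t - weightedValue f (α, z)
  refine mem_convexHull_of_exists_fintype α (fun k => (z k, f (z k) + c)) hα₀ hα₁
    (fun k => ⟨hz k trivial, by simp [c]; linarith⟩) ?_
  ext
  · simp [Prod.fst_sum, weightedSum]
  · simp [Prod.snd_sum, weightedValue, c, mul_add, sum_add_distrib, ← sum_mul, hα₁]

variable [TopologicalSpace E] [IsTopologicalAddGroup E] [ContinuousSMul ℝ E]

theorem continuous_weightedSum : Continuous (weightedSum : (ι → ℝ) × (ι → E) → E) := by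
  unfold weightedSum
  fun_prop

theorem isClosed_setOf_weightedValue_le [T2Space E] (hX : IsCompact X)
    (hf : LowerSemicontinuousOn f X) (hfb : BddBelow (f '' X)) :
    IsClosed {q : E × ℝ |
      ∃ p ∈ convexCombinations ι X, weightedSum p = q.1 ∧ weightedValue f p ≤ q.2} := by
  have hK := isCompact_convexCombinations (ι := ι) hX
  have hepi := (lowerSemicontinuousOn_iff_isClosed_epigraph hK.isClosed).1
    (lowerSemicontinuousOn_weightedValue hf hfb)
  have hC : IsClosed {pq : ((ι → ℝ) × (ι → E)) × (E × ℝ) |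
      weightedSum pq.1 = pq.2.1 ∧ pq.1 ∈ convexCombinations ι X ∧
        weightedValue f pq.1 ≤ pq.2.2} :=
    (isClosed_eq (continuous_weightedSum.comp continuous_fst) (by fun_prop)).inter
      (hepi.preimage (by fun_prop : Continuous fun pq : ((ι → ℝ) × (ι → E)) × (E × ℝ) =>
        (pq.1, pq.2.2)))
  convert hK.isClosed_setOf_exists_mem hC using 1
  ext q
  constructor
  · rintro ⟨p, hp, hpq, hpv⟩
    exact ⟨p, hp, hpq, hp, hpv⟩
  · rintro ⟨p, hp, hpq, -, hpv⟩
    exact ⟨p, hp, hpq, hpv⟩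

end Combinations

section Convexify

variable {d : ℕ} {X : Set (EuclideanSpace ℝ (Fin d))} {f : EuclideanSpace ℝ (Fin d) → ℝ}

theorem convexifySet_eq_image (x : EuclideanSpace ℝ (Fin d)) :
    convexifySet d X f x =
      weightedValue f '' {p ∈ convexCombinations (Fin (d + 1)) X | weightedSum p = x} := by
  ext r
  constructor
  · rintro ⟨α, z, hα₀, hα₁, hz, hx, rfl⟩
    exact ⟨(α, z), ⟨⟨⟨hα₀, hα₁⟩, fun k _ => hz k⟩, hx⟩, rfl⟩
  · rintro ⟨⟨α, z⟩, ⟨⟨⟨hα₀, hα₁⟩, hz⟩, hx⟩, rfl⟩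
    exact ⟨α, z, hα₀, hα₁, fun k => hz k trivial, hx, rfl⟩

theorem mem_convexifySet_of_card_le {κ : Type*} [Fintype κ] (hκ : Fintype.card κ ≤ d + 1)
    (w : κ → ℝ) (z : κ → EuclideanSpace ℝ (Fin d)) (hw₀ : ∀ i, 0 ≤ w i) (hw₁ : ∑ i, w i = 1)
    (hz : ∀ i, z i ∈ X) : ∑ i, w i * f (z i) ∈ convexifySet d X f (∑ i, w i • z i) := by
  classical
  obtain ⟨i₀, -, -⟩ := exists_ne_zero_of_sum_ne_zero (hw₁ ▸ one_ne_zero : ∑ i, w i ≠ 0)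
  obtain ⟨e⟩ : Nonempty (κ ↪ Fin (d + 1)) := Function.Embedding.nonempty_of_card_le (by simpa)
  -- pad the family with zero weights on the indices outside the image of `e`
  set α := Function.extend e w 0
  set y := Function.extend e z fun _ => z i₀
  have hsum : ∀ {M : Type} [AddCommMonoid M] (F : ℝ → EuclideanSpace ℝ (Fin d) → M),
      (∀ v, F 0 v = 0) → ∑ k, F (α k) (y k) = ∑ i, F (w i) (z i) := fun F hF =>
    (Fintype.sum_of_injective e e.injective _ _
      (fun k hk => by simp [α, Function.extend_apply' _ _ _ hk, hF])
      fun i => by simp [α, y, e.injective.extend_apply]).symm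
  refine ⟨α, y, fun k => ?_, (hsum (fun a _ => a) fun _ => rfl).trans hw₁, fun k => ?_,
    hsum (· • ·) fun _ => zero_smul ℝ _, (hsum (fun a v => a * f v) fun _ => zero_mul _).symm⟩
  · by_cases hk : ∃ i, e i = k
    · obtain ⟨i, rfl⟩ := hk
      simpa [α, e.injective.extend_apply] using hw₀ i
    · simp [α, Function.extend_apply' _ _ _ hk]
  · by_cases hk : ∃ i, e i = k
    · obtain ⟨i, rfl⟩ := hk
      simpa [y, e.injective.extend_apply] using hz i
    · simpa [y, Function.extend_apply' _ _ _ hk] using hz i₀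

theorem exists_mem_convexifySet_le {κ : Type*} [Fintype κ] (w : κ → ℝ)
    (z : κ → EuclideanSpace ℝ (Fin d)) (hw₀ : ∀ i, 0 ≤ w i) (hw₁ : ∑ i, w i = 1)
    (hz : ∀ i, z i ∈ X) :
    ∃ r ∈ convexifySet d X f (∑ i, w i • z i), r ≤ ∑ i, w i * f (z i) := by
  obtain ⟨t, -, ht, w', hw', hsum, hzsum, hv⟩ :=
    exists_subset_card_le_weights_le univ z (f ∘ z) w fun i _ => hw₀ i
  rw [finrank_euclideanSpace_fin] at ht
  refine ⟨∑ i : t, w' i * f (z i), ?_, by rwa [sum_coe_sort t fun i => w' i * f (z i)]⟩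
  rw [← hzsum, ← sum_coe_sort t]
  exact mem_convexifySet_of_card_le (by simpa using ht) (fun i : t => w' i) (fun i => z i)
    (fun i => hw' i i.2) (by rw [sum_coe_sort t w', hsum, hw₁]) fun i => hz i

theorem convexifySet_nonempty {x : EuclideanSpace ℝ (Fin d)} (hx : x ∈ convexHull ℝ X) :
    (convexifySet d X f x).Nonempty := by
  obtain ⟨κ, _, w, z, hw₀, hw₁, hz, rfl⟩ := mem_convexHull_iff_exists_fintype.1 hx
  obtain ⟨r, hr, -⟩ := exists_mem_convexifySet_le (f := f) w z hw₀ hw₁ hz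
  exact ⟨r, hr⟩

theorem isLeast_convexify (hX : IsCompact X) (hf : LowerSemicontinuousOn f X)
    {x : EuclideanSpace ℝ (Fin d)} (hx : x ∈ convexHull ℝ X) :
    IsLeast (convexifySet d X f x) (convexify d X f x) := by
  set K := {p ∈ convexCombinations (Fin (d + 1)) X | weightedSum p = x}
  have hK : IsCompact K := (isCompact_convexCombinations hX).inter_right
    (isClosed_eq continuous_weightedSum continuous_const)
  have hKne : K.Nonempty := by
    simpa [convexifySet_eq_image] using convexifySet_nonempty (f := f) hx
  obtain ⟨p, hpK, hp⟩ := ((lowerSemicontinuousOn_weightedValue hf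
    (hf.bddBelow_of_isCompact hX)).mono (Set.sep_subset _ _)).exists_isMinOn hKne hK
  have hleast : IsLeast (convexifySet d X f x) (weightedValue f p) := by
    rw [convexifySet_eq_image]
    exact ⟨Set.mem_image_of_mem _ hpK, Set.forall_mem_image.2 (isMinOn_iff.1 hp)⟩
  rwa [convexify, hleast.csInf_eq]

theorem epigraph_convexify_eq (hX : IsCompact X) (hf : LowerSemicontinuousOn f X) :
    {q : EuclideanSpace ℝ (Fin d) × ℝ | q.1 ∈ convexHull ℝ X ∧ convexify d X f q.1 ≤ q.2} =
      {q | ∃ p ∈ convexCombinations (Fin (d + 1)) X,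
        weightedSum p = q.1 ∧ weightedValue f p ≤ q.2} := by
  ext ⟨x, t⟩
  constructor
  · rintro ⟨hx, ht⟩
    have hmem := (isLeast_convexify hX hf hx).1
    rw [convexifySet_eq_image] at hmem
    obtain ⟨p, ⟨hp, hpx⟩, hpv⟩ := hmem
    exact ⟨p, hp, hpx, hpv ▸ ht⟩
  · rintro ⟨p, hp, rfl, hpt⟩
    have hx := weightedSum_mem_convexHull hp
    refine ⟨hx, ((isLeast_convexify hX hf hx).2 ?_).trans hpt⟩
    rw [convexifySet_eq_image]
    exact Set.mem_image_of_mem _ ⟨hp, rfl⟩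

theorem convexHull_epigraph_subset_epigraph_convexify (hX : IsCompact X)
    (hf : LowerSemicontinuousOn f X) :
    convexHull ℝ {q : EuclideanSpace ℝ (Fin d) × ℝ | q.1 ∈ X ∧ f q.1 ≤ q.2} ⊆
      {q | q.1 ∈ convexHull ℝ X ∧ convexify d X f q.1 ≤ q.2} := by
  intro q hq
  obtain ⟨κ, _, w, y, hw₀, hw₁, hy, rfl⟩ := mem_convexHull_iff_exists_fintype.1 hq
  have hx : ∑ i, w i • (y i).1 ∈ convexHull ℝ X :=
    mem_convexHull_of_exists_fintype w _ hw₀ hw₁ (fun i => (hy i).1) rfl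
  obtain ⟨r, hr, hrv⟩ := exists_mem_convexifySet_le (f := f) w _ hw₀ hw₁ fun i => (hy i).1
  simp only [Set.mem_ofPred_eq, Prod.fst_sum, Prod.snd_sum, Prod.smul_fst, Prod.smul_snd,
    smul_eq_mul]
  refine ⟨hx, ?_⟩
  calc convexify d X f (∑ i, w i • (y i).1) ≤ r := (isLeast_convexify hX hf hx).2 hr
    _ ≤ ∑ i, w i * f (y i).1 := hrv
    _ ≤ ∑ i, w i * (y i).2 := sum_le_sum fun i _ => mul_le_mul_of_nonneg_left (hy i).2 (hw₀ i)

end Convexify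

/-- The convexification `f̃` is convex and l.s.c. on `conv(X)`, and its epigraph
is the closure of the convex hull of the epigraph of `f`. -/
theorem convexification_convex_lsc_epi (d : ℕ) (X : Set (EuclideanSpace ℝ (Fin d)))
    (hX : IsCompact X) (f : EuclideanSpace ℝ (Fin d) → ℝ)
    (hf : LowerSemicontinuousOn f X) :
    ConvexOn ℝ (convexHull ℝ X) (convexify d X f) ∧
    LowerSemicontinuousOn (convexify d X f) (convexHull ℝ X) ∧
    {p : EuclideanSpace ℝ (Fin d) × ℝ | p.1 ∈ convexHull ℝ X ∧ convexify d X f p.1 ≤ p.2}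
      = closure (convexHull ℝ {p : EuclideanSpace ℝ (Fin d) × ℝ | p.1 ∈ X ∧ f p.1 ≤ p.2}) := by
  have hepi := epigraph_convexify_eq hX hf
  have hclosed : IsClosed
      {p : EuclideanSpace ℝ (Fin d) × ℝ | p.1 ∈ convexHull ℝ X ∧ convexify d X f p.1 ≤ p.2} :=
    hepi ▸ isClosed_setOf_weightedValue_le hX hf (hf.bddBelow_of_isCompact hX)
  have hconv : {p : EuclideanSpace ℝ (Fin d) × ℝ |
      p.1 ∈ convexHull ℝ X ∧ convexify d X f p.1 ≤ p.2} =
        convexHull ℝ {p : EuclideanSpace ℝ (Fin d) × ℝ | p.1 ∈ X ∧ f p.1 ≤ p.2} :=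
    (hepi.trans_subset setOf_weightedValue_le_subset_convexHull).antisymm
      (convexHull_epigraph_subset_epigraph_convexify hX hf)
  refine ⟨convexOn_iff_convex_epigraph.2 (hconv ▸ convex_convexHull ℝ _),
    lowerSemicontinuousOn_of_isClosed_epigraph hclosed, ?_⟩
  rw [← hconv, hclosed.closure_eq]
end

section
/- Let X ⊆ R^d be compact, f : X → R lower semicontinuous, and f̃ its convexification on conv(X). Suppose x̃ ∈ conv(X) minimizes f̃ over conv(X), and let (z^1, ..., z^{d+1}) ∈ X^{d+1} with coefficients α ∈ S_d achieve the minimum in the definition of f̃(x̃). Then every z^k with α^k > 0 minimizes f over X. -/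
/-- A lower semicontinuous function on a compact set is bounded below. -/
lemma lsc_bddBelow {d : ℕ} {X : Set (EuclideanSpace ℝ (Fin d))}
    (hX : IsCompact X) {f : EuclideanSpace ℝ (Fin d) → ℝ}
    (hf : LowerSemicontinuousOn f X) : ∃ m : ℝ, ∀ y ∈ X, m ≤ f y := by
  by_contra h
  push_neg at h
  have hu : ∀ n : ℕ, ∃ y ∈ X, f y < -n := fun n => h (-n)
  choose u huX hufu using hu
  obtain ⟨a, haX, φ, hφ, hconv⟩ := hX.tendsto_subseq huX
  have hev := hf a haX (f a - 1) (by linarith)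
  have htend : Filter.Tendsto (fun n => u (φ n)) Filter.atTop (nhdsWithin a X) := by
    rw [tendsto_nhdsWithin_iff]
    exact ⟨hconv, Filter.Eventually.of_forall fun n => huX (φ n)⟩
  have hev2 : ∀ᶠ n in Filter.atTop, f a - 1 < f (u (φ n)) := htend.eventually hev
  obtain ⟨N, hN⟩ := Filter.eventually_atTop.1 hev2
  obtain ⟨M, hM⟩ := exists_nat_gt (1 - f a)
  set n := max N M with hn
  have h1 : f a - 1 < f (u (φ n)) := hN n (le_max_left _ _)
  have h2 : f (u (φ n)) < -(φ n : ℝ) := hufu (φ n)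
  have h3 : (n : ℕ) ≤ φ n := hφ.le_apply
  have h4 : (M : ℝ) ≤ (φ n : ℝ) := by
    exact_mod_cast le_trans (le_max_right N M) h3
  linarith

/-- If `xt` minimizes the convexification `f̃` over `conv(X)` and `(z, α)` is a
generator for `xt`, then every `z^k` with `α^k > 0` minimizes `f` over `X`. -/
theorem generator_minimizes (d : ℕ) (X : Set (EuclideanSpace ℝ (Fin d)))
    (hX : IsCompact X) (f : EuclideanSpace ℝ (Fin d) → ℝ)
    (hf : LowerSemicontinuousOn f X)
    (xt : EuclideanSpace ℝ (Fin d)) (hxt : xt ∈ convexHull ℝ X)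
    (hmin : ∀ y ∈ convexHull ℝ X, convexify d X f xt ≤ convexify d X f y)
    (α : Fin (d + 1) → ℝ) (z : Fin (d + 1) → EuclideanSpace ℝ (Fin d))
    (hα0 : ∀ k, 0 ≤ α k) (hα1 : ∑ k, α k = 1) (hzX : ∀ k, z k ∈ X)
    (hcomb : ∑ k, α k • z k = xt)
    (hgen : ∑ k, α k * f (z k) = convexify d X f xt) :
    ∀ k, 0 < α k → ∀ y ∈ X, f (z k) ≤ f y := by
  obtain ⟨m, hm⟩ := lsc_bddBelow hX hf
  intro k hk y hy
  by_contra hlt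
  push_neg at hlt
  -- new generator replacing z k by y
  set z' : Fin (d + 1) → EuclideanSpace ℝ (Fin d) := fun j => if j = k then y else z j with hz'
  have hz'X : ∀ j, z' j ∈ X := by
    intro j; simp only [hz']; split <;> [exact hy; exact hzX j]
  set x' : EuclideanSpace ℝ (Fin d) := ∑ j, α j • z' j with hx'
  have hx'conv : x' ∈ convexHull ℝ X := by
    exact (convex_convexHull ℝ X).sum_mem (fun j _ => hα0 j) hα1
      (fun j _ => subset_convexHull ℝ X (hz'X j))
  have hmem : (∑ j, α j * f (z' j)) ∈ convexifySet d X f x' :=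
    ⟨α, z', hα0, hα1, hz'X, rfl, rfl⟩
  have hbdd : BddBelow (convexifySet d X f x') := by
    refine ⟨m, ?_⟩
    rintro r ⟨β, w, hβ0, hβ1, hwX, -, rfl⟩
    calc m = ∑ j, β j * m := by rw [← Finset.sum_mul, hβ1, one_mul]
      _ ≤ ∑ j, β j * f (w j) :=
        Finset.sum_le_sum fun j _ => mul_le_mul_of_nonneg_left (hm _ (hwX j)) (hβ0 j)
  have h1 : convexify d X f x' ≤ ∑ j, α j * f (z' j) := csInf_le hbdd hmem
  have hle : ∀ j ∈ Finset.univ, α j * f (z' j) ≤ α j * f (z j) := by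
    intro j _
    simp only [hz']
    rcases eq_or_ne j k with rfl | hne
    · simp only [if_pos rfl]
      exact mul_le_mul_of_nonneg_left hlt.le (hα0 j)
    · simp [hne]
  have hstrict : α k * f (z' k) < α k * f (z k) := by
    simp only [hz', if_pos rfl]
    exact mul_lt_mul_of_pos_left hlt hk
  have h2 : ∑ j, α j * f (z' j) < ∑ j, α j * f (z j) :=
    Finset.sum_lt_sum hle ⟨k, Finset.mem_univ k, hstrict⟩
  have h3 := hmin x' hx'conv
  rw [← hgen] at h3
  linarith
end

section
/- In the congestion game setting, if a profile x̄ ∈ Π_i X_i is an ε-pure Nash equilibrium of the auxiliary game with costs f̄_i(x_i, x_{−i}) = ⟨g((1/n) Σ_{j≠i} a_j x_j + (1/n) a_i x_i^+), x_i⟩ + r_i(x_i), then x̄ is an (ε + L_h M Δ / n + 2 L_g M Δ² / n)-pure Nash equilibrium of the game with costs f_i(x_i, x_{−i}) = ⟨g((1/n) Σ_j a_j x_j), x_i⟩ + h_i((1/n) Σ_j a_j x_j) + r_i(x_i). -/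
open scoped RealInnerProductSpace

/-!
Against a fixed profile of the others, player `i`'s auxiliary cost evaluates `g` at an aggregate
that ignores `i`'s own action. It differs from the true aggregate by `a_i (x_i - x_i⁺) / n`, of norm
at most `M Δ / n`. Coordinatewise `L_g`-Lipschitz makes `g` `L_g`-Lipschitz in the Euclidean
norm, and actions have norm at most `Δ`, so replacing one aggregate by the other moves
`⟪g(·), x_i⟫` by at most `L_g M Δ² / n`; this is paid once at `x̄_i` and once at the deviation.
The term `h_i` moves by at most `L_h M Δ / n` between the two true aggregates.
-/

open Finset Function

lemma EuclideanSpace.norm_le_mul_of_forall_abs_le {ι : Type*} [Fintype ι] {L : ℝ} (hL : 0 ≤ L)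
    {p q : EuclideanSpace ℝ ι} (h : ∀ t, |p t| ≤ L * |q t|) : ‖p‖ ≤ L * ‖q‖ := by
  refine le_of_sq_le_sq ?_ (by positivity)
  rw [mul_pow, EuclideanSpace.real_norm_sq_eq, EuclideanSpace.real_norm_sq_eq, mul_sum]
  refine sum_le_sum fun t _ => ?_
  rw [← sq_abs (p t), ← sq_abs (q t), ← mul_pow]
  exact pow_le_pow_left₀ (abs_nonneg _) (h t) 2

lemma EuclideanSpace.norm_sub_le_of_coord_lipschitz {ι : Type*} [Fintype ι] {L : ℝ} (hL : 0 ≤ L)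
    {g : ι → ℝ → ℝ} (hg : ∀ t s s', |g t s - g t s'| ≤ L * |s - s'|)
    {G : EuclideanSpace ℝ ι → EuclideanSpace ℝ ι} (hG : ∀ y t, G y t = g t (y t))
    (u v : EuclideanSpace ℝ ι) : ‖G u - G v‖ ≤ L * ‖u - v‖ :=
  EuclideanSpace.norm_le_mul_of_forall_abs_le hL fun t => by
    simpa only [PiLp.sub_apply, hG] using hg t (u t) (v t)

lemma inner_le_inner_add_of_norm_sub_le {E F : Type*} [NormedAddCommGroup E]
    [NormedAddCommGroup F] [InnerProductSpace ℝ F] {L : ℝ} (hL : 0 ≤ L) {G : E → F}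
    (hG : ∀ u v, ‖G u - G v‖ ≤ L * ‖u - v‖) {u w : E} {δ : ℝ} (huw : ‖u - w‖ ≤ δ)
    {x : F} {Δ : ℝ} (hx : ‖x‖ ≤ Δ) : ⟪G u, x⟫ ≤ ⟪G w, x⟫ + L * δ * Δ := by
  have hδ : 0 ≤ δ := (norm_nonneg _).trans huw
  have hinner : ⟪G u - G w, x⟫ ≤ L * δ * Δ :=
    calc ⟪G u - G w, x⟫ ≤ ‖G u - G w‖ * ‖x‖ := real_inner_le_norm _ _
      _ ≤ L * δ * Δ := by gcongr; exact (hG u w).trans (by gcongr)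
  rw [inner_sub_left] at hinner
  linarith

lemma norm_sub_le_of_diam_convexHull_le {E : Type*} [SeminormedAddCommGroup E]
    [NormedSpace ℝ E] {X : Set E} {Δ : ℝ} (hnorm : ∀ y ∈ convexHull ℝ X, ‖y‖ ≤ Δ)
    (hdiam : Metric.diam (convexHull ℝ X) ≤ Δ) {p q : E} (hp : p ∈ X) (hq : q ∈ X) :
    ‖p - q‖ ≤ Δ := by
  have hbdd : Bornology.IsBounded (convexHull ℝ X) := isBounded_iff_forall_norm_le.mpr ⟨Δ, hnorm⟩
  rw [← dist_eq_norm]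
  exact (Metric.dist_le_diam_of_mem hbdd (subset_convexHull ℝ X hp)
    (subset_convexHull ℝ X hq)).trans hdiam

lemma norm_inv_smul_add_smul_sub_le {E : Type*} [SeminormedAddCommGroup E] [NormedSpace ℝ E]
    {X : Set E} {Δ : ℝ} (hnorm : ∀ y ∈ convexHull ℝ X, ‖y‖ ≤ Δ)
    (hdiam : Metric.diam (convexHull ℝ X) ≤ Δ) (n : ℕ) {c M : ℝ} (hc : 0 ≤ c) (hcM : c ≤ M)
    (σ : E) {p q : E} (hp : p ∈ X) (hq : q ∈ X) :
    ‖(n : ℝ)⁻¹ • (σ + c • p) - (n : ℝ)⁻¹ • (σ + c • q)‖ ≤ M * Δ / n := by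
  have hdiff : (n : ℝ)⁻¹ • (σ + c • p) - (n : ℝ)⁻¹ • (σ + c • q) = ((n : ℝ)⁻¹ * c) • (p - q) := by
    module
  have hM : 0 ≤ M := hc.trans hcM
  rw [hdiff, norm_smul, Real.norm_of_nonneg (by positivity), div_eq_inv_mul, mul_assoc]
  gcongr
  exact norm_sub_le_of_diam_convexHull_le hnorm hdiam hp hq

lemma sum_smul_update_eq {ι E : Type*} [Fintype ι] [DecidableEq ι] [AddCommMonoid E]
    [Module ℝ E] (a : ι → ℝ) (x : ι → E) (i : ι) (z : E) :
    ∑ j, a j • update x i z j = ∑ j ∈ univ.erase i, a j • x j + a i • z := by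
  rw [← sum_erase_add _ _ (mem_univ i), update_self]
  congr 1
  exact sum_congr rfl fun j hj => by rw [update_of_ne (ne_of_mem_erase hj)]

lemma sum_erase_smul_update_eq {ι E : Type*} [Fintype ι] [DecidableEq ι] [AddCommMonoid E]
    [Module ℝ E] (a : ι → ℝ) (x : ι → E) (i : ι) (z : E) :
    ∑ j ∈ univ.erase i, a j • update x i z j = ∑ j ∈ univ.erase i, a j • x j :=
  sum_congr rfl fun j hj => by rw [update_of_ne (ne_of_mem_erase hj)]

theorem auxiliary_PNE_transfer_general (n d : ℕ) (m M Δ Lg Lh ε : ℝ)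
    (hm : 0 < m) (hLg : 0 ≤ Lg) (hLh : 0 ≤ Lh)
    (X : Fin n → Set (EuclideanSpace ℝ (Fin d)))
    (hΔnorm : ∀ i, ∀ y ∈ convexHull ℝ (X i), ‖y‖ ≤ Δ)
    (hΔdiam : ∀ i, Metric.diam (convexHull ℝ (X i)) ≤ Δ)
    (gc : Fin d → ℝ → ℝ) (hgc : ∀ t s s', |gc t s - gc t s'| ≤ Lg * |s - s'|)
    (G : EuclideanSpace ℝ (Fin d) → EuclideanSpace ℝ (Fin d))
    (hG : ∀ y t, G y t = gc t (y t))
    (h : Fin n → EuclideanSpace ℝ (Fin d) → ℝ)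
    (hh : ∀ i y y', |h i y - h i y'| ≤ Lh * ‖y - y'‖)
    (r : Fin n → EuclideanSpace ℝ (Fin d) → ℝ)
    (a : Fin n → ℝ) (ha : ∀ i, m ≤ a i ∧ a i ≤ M)
    (xplus : Fin n → EuclideanSpace ℝ (Fin d)) (hxplus : ∀ i, xplus i ∈ X i)
    (fbar f : Fin n → (Fin n → EuclideanSpace ℝ (Fin d)) → ℝ)
    (hfbar : ∀ i x, fbar i x =
      ⟪G ((n : ℝ)⁻¹ • (∑ j ∈ Finset.univ.erase i, a j • x j) +
          (n : ℝ)⁻¹ • (a i • xplus i)), x i⟫ + r i (x i))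
    (hf : ∀ i x, f i x = ⟪G ((n : ℝ)⁻¹ • ∑ j, a j • x j), x i⟫ +
      h i ((n : ℝ)⁻¹ • ∑ j, a j • x j) + r i (x i))
    (xb : Fin n → EuclideanSpace ℝ (Fin d)) (hxb : ∀ i, xb i ∈ X i)
    (hPNE : ∀ i, ∀ y ∈ X i, fbar i xb ≤ fbar i (Function.update xb i y) + ε) :
    ∀ i, ∀ y ∈ X i, f i xb ≤ f i (Function.update xb i y) +
      (ε + Lh * M * Δ / n + 2 * Lg * M * Δ ^ 2 / n) := by
  intro i y hy
  set σ := ∑ j ∈ univ.erase i, a j • xb j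
  -- the aggregate `(1/n) Σ_j a_j x_j` when player `i` plays `z` against `xb`
  set agg : EuclideanSpace ℝ (Fin d) → EuclideanSpace ℝ (Fin d) :=
    fun z => (n : ℝ)⁻¹ • (σ + a i • z)
  have hf_update : ∀ z, f i (update xb i z) = ⟪G (agg z), z⟫ + h i (agg z) + r i z := fun z => by
    rw [hf, sum_smul_update_eq, update_self]
  have hfbar_update : ∀ z, fbar i (update xb i z) = ⟪G (agg (xplus i)), z⟫ + r i z := fun z => by
    rw [hfbar, sum_erase_smul_update_eq, update_self, ← smul_add]
  have hnorm : ∀ p ∈ X i, ‖p‖ ≤ Δ := fun p hp => hΔnorm i p (subset_convexHull ℝ _ hp)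
  have hagg : ∀ p ∈ X i, ∀ q ∈ X i, ‖agg p - agg q‖ ≤ M * Δ / n := fun p hp q hq =>
    norm_inv_smul_add_smul_sub_le (hΔnorm i) (hΔdiam i) n (hm.le.trans (ha i).1) (ha i).2 σ hp hq
  have hGlip := EuclideanSpace.norm_sub_le_of_coord_lipschitz hLg hgc hG
  have hG_xb := inner_le_inner_add_of_norm_sub_le hLg hGlip
    (hagg _ (hxb i) _ (hxplus i)) (hnorm _ (hxb i))
  have hG_y := inner_le_inner_add_of_norm_sub_le hLg hGlip
    (hagg _ (hxplus i) _ hy) (hnorm _ hy)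
  have hh_xb_y : h i (agg (xb i)) - h i (agg y) ≤ Lh * (M * Δ / n) :=
    (abs_sub_le_iff.mp (hh i _ _)).1.trans (mul_le_mul_of_nonneg_left (hagg _ (hxb i) _ hy) hLh)
  have hPNEi := hPNE i y hy
  rw [← update_eq_self i xb, hfbar_update, update_idem, hfbar_update] at hPNEi
  rw [← update_eq_self i xb, hf_update, update_idem, hf_update]
  linear_combination hPNEi + hG_xb + hG_y + hh_xb_y

/-- An `ε`-PNE of the auxiliary congestion game `Γ̄` is an
`(ε + L_h M Δ / n + 2 L_g M Δ² / n)`-PNE of the original game `Γ`. -/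
theorem auxiliary_PNE_transfer (n d : ℕ) (hn : 0 < n) (m M Δ Lg Lh ε : ℝ)
    (hm : 0 < m) (hΔ : 0 ≤ Δ) (hLg : 0 ≤ Lg) (hLh : 0 ≤ Lh) (hε : 0 ≤ ε)
    (X : Fin n → Set (EuclideanSpace ℝ (Fin d))) (hXcp : ∀ i, IsCompact (X i))
    (hΔnorm : ∀ i, ∀ y ∈ convexHull ℝ (X i), ‖y‖ ≤ Δ)
    (hΔdiam : ∀ i, Metric.diam (convexHull ℝ (X i)) ≤ Δ)
    (gc : Fin d → ℝ → ℝ) (hgc : ∀ t s s', |gc t s - gc t s'| ≤ Lg * |s - s'|)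
    (G : EuclideanSpace ℝ (Fin d) → EuclideanSpace ℝ (Fin d))
    (hG : ∀ y t, G y t = gc t (y t))
    (h : Fin n → EuclideanSpace ℝ (Fin d) → ℝ)
    (hh : ∀ i y y', |h i y - h i y'| ≤ Lh * ‖y - y'‖)
    (r : Fin n → EuclideanSpace ℝ (Fin d) → ℝ)
    (a : Fin n → ℝ) (ha : ∀ i, m ≤ a i ∧ a i ≤ M)
    (xplus : Fin n → EuclideanSpace ℝ (Fin d)) (hxplus : ∀ i, xplus i ∈ X i)
    (fbar f : Fin n → (Fin n → EuclideanSpace ℝ (Fin d)) → ℝ)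
    (hfbar : ∀ i x, fbar i x =
      ⟪G ((n : ℝ)⁻¹ • (∑ j ∈ Finset.univ.erase i, a j • x j) +
          (n : ℝ)⁻¹ • (a i • xplus i)), x i⟫ + r i (x i))
    (hf : ∀ i x, f i x = ⟪G ((n : ℝ)⁻¹ • ∑ j, a j • x j), x i⟫ +
      h i ((n : ℝ)⁻¹ • ∑ j, a j • x j) + r i (x i))
    (xb : Fin n → EuclideanSpace ℝ (Fin d)) (hxb : ∀ i, xb i ∈ X i)
    (hPNE : ∀ i, ∀ y ∈ X i, fbar i xb ≤ fbar i (Function.update xb i y) + ε) :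
    ∀ i, ∀ y ∈ X i, f i xb ≤ f i (Function.update xb i y) +
      (ε + Lh * M * Δ / n + 2 * Lg * M * Δ ^ 2 / n) :=
  auxiliary_PNE_transfer_general n d m M Δ Lg Lh ε hm hLg hLh X hΔnorm hΔdiam gc hgc G hG h hh r a
    ha xplus hxplus fbar f hfbar hf xb hxb hPNE
end
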